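/- arXiv:2406.10657 — 2 statements merged into one kernel-verified Lean document; each statement's English description precedes it below -/
import Mathlib

section
/- Let F_1, F_2 be the coupled diffusion–convection operators defined in the context, with arbitrary real parameters, and let A_{s,i}, B_{s,i} ∈ ℝ (s = 1,2; i = 1,2,3,4). Define μ_s = h_{s0}A_{2,4} + d_{s0}A_{1,4}, ν_s = h_{s0}B_{2,4} + d_{s0}B_{1,4}, γ_s = g_{s0}A_{2,4} + η_{s0}A_{1,4}, κ_s = g_{s0}B_{2,4} + η_{s0}B_{1,4}, l_s = g_{s0}A_{2,2} + h_{s0}A_{2,3} + d_{s0}A_{1,3} + η_{s0}A_{1,2}, ς_s = g_{s0}B_{2,2} + h_{s0}B_{2,3} + d_{s0}B_{1,3} + η_{s0}B_{1,2}, ρ_{s,1} = d_{s0}γ_1 + η_{s0}μ_1, ρ_{s,2} = g_{s0}μ_2 + h_{s0}γ_2, λ_{s,1} = d_{s0}κ_1 + η_{s0}ν_1, λ_{s,2} = g_{s0}ν_2 + h_{s0}κ_2. Set δ_{s,1}(t) = A_{s,1} + B_{s,1}t + l_s t²/2 + ς_s t³/6 + (ρ_{s,1}+ρ_{s,2})t⁴/24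 + (λ_{s,1}+λ_{s,2})t⁵/120, δ_{s,2}(t) = A_{s,2} + B_{s,2}t + μ_s t²/2 + ν_s t³/6, δ_{s,3}(t) = A_{s,3} + B_{s,3}t + γ_s t²/2 + κ_s t³/6, δ_{s,4}(t) = A_{s,4} + B_{s,4}t. Then u_s(x_1,x_2,t) = δ_{s,1}(t) + δ_{s,2}(t)x_1 + δ_{s,3}(t)x_2 + δ_{s,4}(t)x_1x_2 satisfies, for all (x_1,x_2,t) ∈ ℝ³ and s = 1,2, ∂²u_s/∂t²(x_1,x_2,t) = F_s(u_1(·,·,t), u_2(·,·,t))(x_1,x_2), with u_s(x_1,x_2,0) = A_{s,1}+A_{s,2}x_1+A_{s,3}x_2+A_{s,4}x_1x_2 and ∂u_s/∂t(x_1,x_2,0) = B_{s,1}+B_{s,2}x_1+B_{s,3}x_2+B_{s,4}x_1x_2. -/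
/-- Partial derivative in the first variable of a function `ℝ → ℝ → ℝ`. -/
noncomputable def pd1 (u : ℝ → ℝ → ℝ) : ℝ → ℝ → ℝ := fun x1 x2 => deriv (fun y => u y x2) x1

/-- Partial derivative in the second variable of a function `ℝ → ℝ → ℝ`. -/
noncomputable def pd2 (u : ℝ → ℝ → ℝ) : ℝ → ℝ → ℝ := fun x1 x2 => deriv (fun y => u x1 y) x2

/-- The coupled diffusion–convection operator `F_s`. -/
noncomputable def Fop (k0 q0 q1 p0 c0 c1 e0 g0 d0 h0 : ℝ) (u1 u2 : ℝ → ℝ → ℝ) : ℝ → ℝ → ℝ :=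
  fun x1 x2 =>
    pd1 (fun a b => (k0 - q1 * u2 a b) * pd1 u1 a b + (q1 * u1 a b + q0) * pd1 u2 a b) x1 x2 +
    pd2 (fun a b => (p0 - c1 * u2 a b) * pd2 u1 a b + (c1 * u1 a b + c0) * pd2 u2 a b) x1 x2 +
    e0 * pd1 u1 x1 x2 + g0 * pd1 u2 x1 x2 + d0 * pd2 u1 x1 x2 + h0 * pd2 u2 x1 x2

/-!
Every `u_s(·,·,t)` is biaffine in `(x₁, x₂)`. For biaffine `u₁, u₂` the `x₁`-flux
`(k₀ - q₁u₂)∂₁u₁ + (q₁u₁ + q₀)∂₁u₂` does not depend on `x₁` (the cross terms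
`q₁(u₁∂₁u₂ - u₂∂₁u₁)` cancel in `x₁`), and likewise for the `x₂`-flux, so `F_s` reduces to its
first-order convection terms. These are biaffine with coefficients affine in `t`, and the
coefficients of `δ_{s,i}` are chosen so that the second time derivative of `u_s` matches them.
-/

noncomputable def biaffine (a b c e : ℝ) : ℝ → ℝ → ℝ := fun x1 x2 => a + b * x1 + c * x2 + e * x1 * x2

lemma deriv_affine (a b y : ℝ) : deriv (fun y => a + b * y) y = b :=
  (((hasDerivAt_id y).const_mul b).const_add a).deriv.trans (mul_one b)

lemma pd1_biaffine (a b c e : ℝ) : pd1 (biaffine a b c e) = fun _ x2 => b + e * x2 := by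
  funext x1 x2
  have h_affine : (fun y => biaffine a b c e y x2) = fun y => (a + c * x2) + (b + e * x2) * y := by
    funext y
    rw [biaffine]
    ring
  rw [pd1, h_affine, deriv_affine]

lemma pd2_biaffine (a b c e : ℝ) : pd2 (biaffine a b c e) = fun x1 _ => c + e * x1 := by
  funext x1 x2
  have h_affine : (fun y => biaffine a b c e x1 y) = fun y => (a + b * x1) + (c + e * x1) * y := by
    funext y
    rw [biaffine]
    ring
  rw [pd2, h_affine, deriv_affine]

lemma pd1_eq_zero {F : ℝ → ℝ → ℝ} {x2 : ℝ} (hF : ∀ a, F a x2 = F 0 x2) (x1 : ℝ) :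
    pd1 F x1 x2 = 0 := by
  simp only [pd1, hF, deriv_const]

lemma pd2_eq_zero {F : ℝ → ℝ → ℝ} {x1 : ℝ} (hF : ∀ b, F x1 b = F x1 0) (x2 : ℝ) :
    pd2 F x1 x2 = 0 := by
  simp only [pd2, hF, deriv_const]

lemma Fop_biaffine (k0 q0 q1 p0 c0 c1 e0 g0 d0 h0 a b c e a' b' c' e' x1 x2 : ℝ) :
    Fop k0 q0 q1 p0 c0 c1 e0 g0 d0 h0 (biaffine a b c e) (biaffine a' b' c' e') x1 x2 =
      e0 * (b + e * x2) + g0 * (b' + e' * x2) + d0 * (c + e * x1) + h0 * (c' + e' * x1) := by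
  rw [Fop, pd1_eq_zero, pd2_eq_zero]
  · simp only [pd1_biaffine, pd2_biaffine]
    ring
  all_goals
    intro
    simp only [pd1_biaffine, pd2_biaffine, biaffine]
    ring

noncomputable def taylorQuintic (c0 c1 c2 c3 c4 c5 : ℝ) (t : ℝ) : ℝ :=
  c0 + c1 * t + c2 * t ^ 2 / 2 + c3 * t ^ 3 / 6 + c4 * t ^ 4 / 24 + c5 * t ^ 5 / 120

lemma deriv_taylorQuintic (c0 c1 c2 c3 c4 c5 : ℝ) :
    deriv (taylorQuintic c0 c1 c2 c3 c4 c5) = taylorQuintic c1 c2 c3 c4 c5 0 := by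
  funext t
  have H : HasDerivAt (taylorQuintic c0 c1 c2 c3 c4 c5)
      (0 + c1 * 1 + c2 * (2 * t ^ 1) / 2 + c3 * (3 * t ^ 2) / 6 + c4 * (4 * t ^ 3) / 24
        + c5 * (5 * t ^ 4) / 120) t :=
    (((((hasDerivAt_const t c0).add ((hasDerivAt_id t).const_mul c1)).add
      (((hasDerivAt_pow 2 t).const_mul c2).div_const 2)).add
      (((hasDerivAt_pow 3 t).const_mul c3).div_const 6)).add
      (((hasDerivAt_pow 4 t).const_mul c4).div_const 24)).add
      (((hasDerivAt_pow 5 t).const_mul c5).div_const 120)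
  rw [H.deriv, taylorQuintic]
  ring

lemma taylorQuintic_zero (c0 c1 c2 c3 c4 c5 : ℝ) : taylorQuintic c0 c1 c2 c3 c4 c5 0 = c0 := by
  simp [taylorQuintic]

/-- The analytical solution of Example 3.1 for the wave case α₁ = α₂ = 2. -/
theorem stmt_7 (k0 q0 q1 p0 c0 c1 η g d h : Fin 2 → ℝ) (A B : Fin 2 → Fin 4 → ℝ)
    (μ ν γ κ l ς ρ1 ρ2 lam1 lam2 : Fin 2 → ℝ)
    (hμ : ∀ s, μ s = h s * A 1 3 + d s * A 0 3)
    (hν : ∀ s, ν s = h s * B 1 3 + d s * B 0 3)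
    (hγ : ∀ s, γ s = g s * A 1 3 + η s * A 0 3)
    (hκ : ∀ s, κ s = g s * B 1 3 + η s * B 0 3)
    (hl : ∀ s, l s = g s * A 1 1 + h s * A 1 2 + d s * A 0 2 + η s * A 0 1)
    (hς : ∀ s, ς s = g s * B 1 1 + h s * B 1 2 + d s * B 0 2 + η s * B 0 1)
    (hρ1 : ∀ s, ρ1 s = d s * γ 0 + η s * μ 0)
    (hρ2 : ∀ s, ρ2 s = g s * μ 1 + h s * γ 1)
    (hlam1 : ∀ s, lam1 s = d s * κ 0 + η s * ν 0)
    (hlam2 : ∀ s, lam2 s = g s * ν 1 + h s * κ 1)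
    (δ : Fin 2 → Fin 4 → ℝ → ℝ)
    (hδ1 : ∀ s t, δ s 0 t = A s 0 + B s 0 * t + l s * t ^ 2 / 2 + ς s * t ^ 3 / 6 +
      (ρ1 s + ρ2 s) * t ^ 4 / 24 + (lam1 s + lam2 s) * t ^ 5 / 120)
    (hδ2 : ∀ s t, δ s 1 t = A s 1 + B s 1 * t + μ s * t ^ 2 / 2 + ν s * t ^ 3 / 6)
    (hδ3 : ∀ s t, δ s 2 t = A s 2 + B s 2 * t + γ s * t ^ 2 / 2 + κ s * t ^ 3 / 6)
    (hδ4 : ∀ s t, δ s 3 t = A s 3 + B s 3 * t)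
    (u : Fin 2 → ℝ → ℝ → ℝ → ℝ)
    (hu : ∀ s x1 x2 t, u s x1 x2 t =
      δ s 0 t + δ s 1 t * x1 + δ s 2 t * x2 + δ s 3 t * x1 * x2) :
    ∀ (s : Fin 2) (x1 x2 t : ℝ),
      (deriv (fun τ => deriv (fun σ => u s x1 x2 σ) τ) t =
        Fop (k0 s) (q0 s) (q1 s) (p0 s) (c0 s) (c1 s) (η s) (g s) (d s) (h s)
          (fun a b => u 0 a b t) (fun a b => u 1 a b t) x1 x2) ∧
      u s x1 x2 0 = A s 0 + A s 1 * x1 + A s 2 * x2 + A s 3 * x1 * x2 ∧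
      deriv (fun σ => u s x1 x2 σ) 0 = B s 0 + B s 1 * x1 + B s 2 * x2 + B s 3 * x1 * x2 := by
  intro s x1 x2 t
  have h_slice : ∀ s', (fun a b => u s' a b t) =
      biaffine (δ s' 0 t) (δ s' 1 t) (δ s' 2 t) (δ s' 3 t) := by
    intro s'
    funext a b
    rw [hu, biaffine]
  have h_time : (fun σ => u s x1 x2 σ) = taylorQuintic
      (biaffine (A s 0) (A s 1) (A s 2) (A s 3) x1 x2)
      (biaffine (B s 0) (B s 1) (B s 2) (B s 3) x1 x2)
      (l s + μ s * x1 + γ s * x2) (ς s + ν s * x1 + κ s * x2)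
      (ρ1 s + ρ2 s) (lam1 s + lam2 s) := by
    funext σ
    rw [hu, hδ1, hδ2, hδ3, hδ4, taylorQuintic, biaffine, biaffine]
    ring
  refine ⟨?_, ?_, ?_⟩
  · rw [h_slice, h_slice, Fop_biaffine, h_time, deriv_taylorQuintic, deriv_taylorQuintic,
      taylorQuintic]
    simp only [hδ2, hδ3, hδ4, hl, hς, hμ, hν, hγ, hκ, hρ1, hρ2, hlam1, hlam2]
    ring
  · rw [show u s x1 x2 0 = (fun σ => u s x1 x2 σ) 0 from rfl, h_time, taylorQuintic_zero,
      biaffine]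
  · rw [h_time, deriv_taylorQuintic, taylorQuintic_zero, biaffine]
end

section
/- Let H_1, H_2 be the trigonometric–exponential system operators defined in the context, with a_{10} > 0, b_{11} ≠ 0, and suppose moreover η_{10} = d_{10} = h_{20} = 0. Let A_{s,i} ∈ ℝ (s = 1,2; i = 1,2,3,4) and set γ_0 = q_{20}b_{11}² − g_{20}b_{11}. Then the functions u_1(x_1,x_2,t) = e^{−k_{10}a_{10}t}[(A_{1,1} + A_{1,2}x_2)sin(√a_{10}x_1) + (A_{1,3} + A_{1,4}x_2)cos(√a_{10}x_1)] and u_2(x_1,x_2,t) = A_{2,1} + A_{2,2}x_2 + e^{γ_0 t}(A_{2,3} + A_{2,4}x_2)e^{−b_{11}x_1} satisfy, for all (x_1,x_2,t) ∈ ℝ³ and s = 1,2, ∂u_s/∂t(x_1,x_2,t) = H_s(u_1(·,·,t), u_2(·,·,t))(x_1,x_2). -/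
/-- The first operator `H₁` of the trigonometric–exponential system (Example 3.4). -/
noncomputable def Hop1 (k10 g10 p10 c10 c11 e10 d10 b11 : ℝ) (u1 u2 : ℝ → ℝ → ℝ) : ℝ → ℝ → ℝ :=
  fun x1 x2 =>
    k10 * pd1 (pd1 u1) x1 x2 + (g10 / b11) * pd1 (pd1 u2) x1 x2 +
    pd2 (fun a b => (p10 - c11 * u2 a b) * pd2 u1 a b + (c11 * u1 a b + c10) * pd2 u2 a b) x1 x2 +
    e10 * pd1 u1 x1 x2 + g10 * pd1 u2 x1 x2 + d10 * pd2 u1 x1 x2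

/-- The second operator `H₂` of the trigonometric–exponential system (Example 3.4). -/
noncomputable def Hop2 (q20 p20 c20 c21 g20 h20 : ℝ) (u1 u2 : ℝ → ℝ → ℝ) : ℝ → ℝ → ℝ :=
  fun x1 x2 =>
    q20 * pd1 (pd1 u2) x1 x2 +
    pd2 (fun a b => (p20 - c21 * u2 a b) * pd2 u1 a b + (c21 * u1 a b + c20) * pd2 u2 a b) x1 x2 +
    g20 * pd1 u2 x1 x2 + h20 * pd2 u2 x1 x2

lemma hd_exp (r x : ℝ) : HasDerivAt (fun y => Real.exp (r * y)) (r * Real.exp (r * x)) x := by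
  simpa [mul_comm, Function.comp_def] using (Real.hasDerivAt_exp (r*x)).comp x ((hasDerivAt_id x).const_mul r)

lemma hd_sin (s x : ℝ) : HasDerivAt (fun y => Real.sin (s * y)) (s * Real.cos (s * x)) x := by
  simpa [mul_comm, Function.comp_def] using (Real.hasDerivAt_sin (s*x)).comp x ((hasDerivAt_id x).const_mul s)

lemma hd_cos (s x : ℝ) : HasDerivAt (fun y => Real.cos (s * y)) (-(s * Real.sin (s * x))) x := by
  simpa [mul_comm, Function.comp_def] using (Real.hasDerivAt_cos (s*x)).comp x ((hasDerivAt_id x).const_mul s)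

lemma hd_lin (p q x : ℝ) : HasDerivAt (fun y => p + q * y) q x := by
  simpa using ((hasDerivAt_id x).const_mul q).const_add p

/-- The analytical solution (60) of Example 3.4 for α₁ = α₂ = 1, with
η₁₀ = d₁₀ = h₂₀ = 0. -/
theorem stmt_13 (k10 g10 p10 c10 c11 e10 d10 : ℝ) (q20 p20 c20 c21 g20 h20 : ℝ)
    (a10 b11 : ℝ) (ha10 : 0 < a10) (hb11 : b11 ≠ 0)
    (he10 : e10 = 0) (hd10 : d10 = 0) (hh20 : h20 = 0)
    (A : Fin 2 → Fin 4 → ℝ) (γ0 : ℝ) (hγ0 : γ0 = q20 * b11 ^ 2 - g20 * b11)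
    (u1 u2 : ℝ → ℝ → ℝ → ℝ)
    (hu1 : ∀ x1 x2 t, u1 x1 x2 t =
      Real.exp (-(k10 * a10) * t) *
        ((A 0 0 + A 0 1 * x2) * Real.sin (Real.sqrt a10 * x1) +
         (A 0 2 + A 0 3 * x2) * Real.cos (Real.sqrt a10 * x1)))
    (hu2 : ∀ x1 x2 t, u2 x1 x2 t =
      A 1 0 + A 1 1 * x2 +
        Real.exp (γ0 * t) * (A 1 2 + A 1 3 * x2) * Real.exp (-b11 * x1)) :
    ∀ (x1 x2 t : ℝ),
      deriv (fun τ => u1 x1 x2 τ) t =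
        Hop1 k10 g10 p10 c10 c11 e10 d10 b11
          (fun a b => u1 a b t) (fun a b => u2 a b t) x1 x2 ∧
      deriv (fun τ => u2 x1 x2 τ) t =
        Hop2 q20 p20 c20 c21 g20 h20
          (fun a b => u1 a b t) (fun a b => u2 a b t) x1 x2 := by
  obtain ⟨s, hs⟩ : ∃ s, Real.sqrt a10 = s := ⟨_, rfl⟩
  have hss : s * s = a10 := by rw [← hs]; exact Real.mul_self_sqrt ha10.le
  simp only [hs] at hu1
  intro x1 x2 t
  have hu1f : (fun a b => u1 a b t) =
      (fun a b => Real.exp (-(k10 * a10) * t) *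
        ((A 0 0 + A 0 1 * b) * Real.sin (s * a) + (A 0 2 + A 0 3 * b) * Real.cos (s * a))) := by
    funext a b; rw [hu1]
  have hu2f : (fun a b => u2 a b t) =
      (fun a b => A 1 0 + A 1 1 * b +
        Real.exp (γ0 * t) * (A 1 2 + A 1 3 * b) * Real.exp (-b11 * a)) := by
    funext a b; rw [hu2]
  rw [hu1f, hu2f]
  -- closed forms for partials
  have hp1u1 : pd1 (fun a b => Real.exp (-(k10 * a10) * t) *
      ((A 0 0 + A 0 1 * b) * Real.sin (s * a) + (A 0 2 + A 0 3 * b) * Real.cos (s * a))) =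
      fun a b => Real.exp (-(k10 * a10) * t) *
      ((A 0 0 + A 0 1 * b) * (s * Real.cos (s * a)) + (A 0 2 + A 0 3 * b) * -(s * Real.sin (s * a))) := by
    funext a b
    exact ((((hd_sin s a).const_mul (A 0 0 + A 0 1 * b)).add
      ((hd_cos s a).const_mul (A 0 2 + A 0 3 * b))).const_mul (Real.exp (-(k10 * a10) * t))).deriv
  have hp2u1 : pd2 (fun a b => Real.exp (-(k10 * a10) * t) *
      ((A 0 0 + A 0 1 * b) * Real.sin (s * a) + (A 0 2 + A 0 3 * b) * Real.cos (s * a))) =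
      fun a b => Real.exp (-(k10 * a10) * t) *
      (A 0 1 * Real.sin (s * a) + A 0 3 * Real.cos (s * a)) := by
    funext a b
    exact ((((hd_lin (A 0 0) (A 0 1) b).mul_const (Real.sin (s * a))).add
      ((hd_lin (A 0 2) (A 0 3) b).mul_const (Real.cos (s * a)))).const_mul
      (Real.exp (-(k10 * a10) * t))).deriv
  have hp1u2 : pd1 (fun a b => A 1 0 + A 1 1 * b +
      Real.exp (γ0 * t) * (A 1 2 + A 1 3 * b) * Real.exp (-b11 * a)) =
      fun a b => Real.exp (γ0 * t) * (A 1 2 + A 1 3 * b) * (-b11 * Real.exp (-b11 * a)) := by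
    funext a b
    exact (((hd_exp (-b11) a).const_mul
      (Real.exp (γ0 * t) * (A 1 2 + A 1 3 * b))).const_add (A 1 0 + A 1 1 * b)).deriv
  have hp2u2 : pd2 (fun a b => A 1 0 + A 1 1 * b +
      Real.exp (γ0 * t) * (A 1 2 + A 1 3 * b) * Real.exp (-b11 * a)) =
      fun a b => A 1 1 + Real.exp (γ0 * t) * A 1 3 * Real.exp (-b11 * a) := by
    funext a b
    exact ((hd_lin (A 1 0) (A 1 1) b).add
      (((hd_lin (A 1 2) (A 1 3) b).const_mul (Real.exp (γ0 * t))).mul_const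
        (Real.exp (-b11 * a)))).deriv
  simp only [Hop1, Hop2, hp1u1, hp2u1, hp1u2, hp2u2]
  have hU2b : HasDerivAt (fun y => A 1 0 + A 1 1 * y +
      Real.exp (γ0 * t) * (A 1 2 + A 1 3 * y) * Real.exp (-b11 * x1))
      (A 1 1 + Real.exp (γ0 * t) * A 1 3 * Real.exp (-b11 * x1)) x2 :=
    (hd_lin (A 1 0) (A 1 1) x2).add
      (((hd_lin (A 1 2) (A 1 3) x2).const_mul (Real.exp (γ0 * t))).mul_const (Real.exp (-b11 * x1)))
  have hU1b : HasDerivAt (fun y => Real.exp (-(k10 * a10) * t) *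
      ((A 0 0 + A 0 1 * y) * Real.sin (s * x1) + (A 0 2 + A 0 3 * y) * Real.cos (s * x1)))
      (Real.exp (-(k10 * a10) * t) * (A 0 1 * Real.sin (s * x1) + A 0 3 * Real.cos (s * x1))) x2 :=
    (((hd_lin (A 0 0) (A 0 1) x2).mul_const (Real.sin (s * x1))).add
      ((hd_lin (A 0 2) (A 0 3) x2).mul_const (Real.cos (s * x1)))).const_mul
      (Real.exp (-(k10 * a10) * t))
  have hq1 : pd1 (fun a b => Real.exp (-(k10 * a10) * t) *
      ((A 0 0 + A 0 1 * b) * (s * Real.cos (s * a)) + (A 0 2 + A 0 3 * b) * -(s * Real.sin (s * a)))) x1 x2 =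
      Real.exp (-(k10 * a10) * t) *
      ((A 0 0 + A 0 1 * x2) * (s * -(s * Real.sin (s * x1))) +
       (A 0 2 + A 0 3 * x2) * -(s * (s * Real.cos (s * x1)))) := by
    exact (((((hd_cos s x1).const_mul s).const_mul (A 0 0 + A 0 1 * x2)).add
      ((((hd_sin s x1).const_mul s).neg).const_mul (A 0 2 + A 0 3 * x2))).const_mul
      (Real.exp (-(k10 * a10) * t))).deriv
  have hq2 : pd1 (fun a b => Real.exp (γ0 * t) * (A 1 2 + A 1 3 * b) * (-b11 * Real.exp (-b11 * a))) x1 x2 =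
      Real.exp (γ0 * t) * (A 1 2 + A 1 3 * x2) * (-b11 * (-b11 * Real.exp (-b11 * x1))) := by
    exact (((hd_exp (-b11) x1).const_mul (-b11)).const_mul
      (Real.exp (γ0 * t) * (A 1 2 + A 1 3 * x2))).deriv
  have hT1 : deriv (fun τ => u1 x1 x2 τ) t =
      -(k10 * a10) * Real.exp (-(k10 * a10) * t) *
        ((A 0 0 + A 0 1 * x2) * Real.sin (s * x1) + (A 0 2 + A 0 3 * x2) * Real.cos (s * x1)) := by
    have hf : (fun τ => u1 x1 x2 τ) = fun τ => Real.exp (-(k10 * a10) * τ) *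
        ((A 0 0 + A 0 1 * x2) * Real.sin (s * x1) + (A 0 2 + A 0 3 * x2) * Real.cos (s * x1)) :=
      funext fun τ => hu1 x1 x2 τ
    rw [hf]
    exact ((hd_exp (-(k10 * a10)) t).mul_const _).deriv
  have hT2 : deriv (fun τ => u2 x1 x2 τ) t =
      γ0 * Real.exp (γ0 * t) * (A 1 2 + A 1 3 * x2) * Real.exp (-b11 * x1) := by
    have hf : (fun τ => u2 x1 x2 τ) = fun τ => A 1 0 + A 1 1 * x2 +
        Real.exp (γ0 * τ) * (A 1 2 + A 1 3 * x2) * Real.exp (-b11 * x1) :=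
      funext fun τ => hu2 x1 x2 τ
    rw [hf]
    exact ((((hd_exp γ0 t).mul_const (A 1 2 + A 1 3 * x2)).mul_const
      (Real.exp (-b11 * x1))).const_add (A 1 0 + A 1 1 * x2)).deriv
  constructor
  · have hm1 : pd2 (fun a b =>
        (p10 - c11 * (A 1 0 + A 1 1 * b + Real.exp (γ0 * t) * (A 1 2 + A 1 3 * b) * Real.exp (-b11 * a))) *
            (Real.exp (-(k10 * a10) * t) * (A 0 1 * Real.sin (s * a) + A 0 3 * Real.cos (s * a))) +
          (c11 * (Real.exp (-(k10 * a10) * t) *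
              ((A 0 0 + A 0 1 * b) * Real.sin (s * a) + (A 0 2 + A 0 3 * b) * Real.cos (s * a))) + c10) *
            (A 1 1 + Real.exp (γ0 * t) * A 1 3 * Real.exp (-b11 * a))) x1 x2 =
        -(c11 * (A 1 1 + Real.exp (γ0 * t) * A 1 3 * Real.exp (-b11 * x1))) *
            (Real.exp (-(k10 * a10) * t) * (A 0 1 * Real.sin (s * x1) + A 0 3 * Real.cos (s * x1))) +
          c11 * (Real.exp (-(k10 * a10) * t) * (A 0 1 * Real.sin (s * x1) + A 0 3 * Real.cos (s * x1))) *
            (A 1 1 + Real.exp (γ0 * t) * A 1 3 * Real.exp (-b11 * x1)) := by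
      exact ((((hU2b.const_mul c11).const_sub p10).mul_const _).add
        (((hU1b.const_mul c11).add_const c10).mul_const _)).deriv
    rw [hT1, hq1, hq2, hm1, he10, hd10, ← hss]
    field_simp
    ring
  · have hm2 : pd2 (fun a b =>
        (p20 - c21 * (A 1 0 + A 1 1 * b + Real.exp (γ0 * t) * (A 1 2 + A 1 3 * b) * Real.exp (-b11 * a))) *
            (Real.exp (-(k10 * a10) * t) * (A 0 1 * Real.sin (s * a) + A 0 3 * Real.cos (s * a))) +
          (c21 * (Real.exp (-(k10 * a10) * t) *
              ((A 0 0 + A 0 1 * b) * Real.sin (s * a) + (A 0 2 + A 0 3 * b) * Real.cos (s * a))) + c20) *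
            (A 1 1 + Real.exp (γ0 * t) * A 1 3 * Real.exp (-b11 * a))) x1 x2 =
        -(c21 * (A 1 1 + Real.exp (γ0 * t) * A 1 3 * Real.exp (-b11 * x1))) *
            (Real.exp (-(k10 * a10) * t) * (A 0 1 * Real.sin (s * x1) + A 0 3 * Real.cos (s * x1))) +
          c21 * (Real.exp (-(k10 * a10) * t) * (A 0 1 * Real.sin (s * x1) + A 0 3 * Real.cos (s * x1))) *
            (A 1 1 + Real.exp (γ0 * t) * A 1 3 * Real.exp (-b11 * x1)) := by
      exact ((((hU2b.const_mul c21).const_sub p20).mul_const _).add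
        (((hU1b.const_mul c21).add_const c20).mul_const _)).deriv
    rw [hT2, hq2, hm2, hh20, hγ0]
    ring
end
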